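/- arXiv:2407.10183 — 10 statements merged into one kernel-verified Lean document; each statement's English description precedes it below -/
import Mathlib

section
/- For every natural number l, the Bell number B_l satisfies B_l > 4^l / 72, i.e., 72 · B_l > 4^l. -/
/-!
Splitting off the block of a new point injects the pairs (block, partition of the rest) into
the partitions of `Option (Fin n)`, so `B (n + 1) ≥ ∑ i, C(n, i) B (n - i)` and `B` dominates
`Nat.bell`, which satisfies this recurrence with equality. For `Nat.bell`, `72 B_n > 4 ^ n` holds
by strong induction: the recurrence turns it into `72 B (n + 1) ≥ 5 ^ n + 2 ^ n`, which exceeds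
`4 ^ (n + 1)` once `n ≥ 7`, and the first eight values are checked directly.
-/

open Finset

/-- The `l`-th Bell number: the number of partitions (equivalently, equivalence
relations) of a set with `l` elements. -/
noncomputable def bellNumber (l : ℕ) : ℕ := Nat.card (Setoid (Fin l))

instance Setoid.instFinite (α : Type*) [Finite α] : Finite (Setoid α) :=
  Finite.of_injective (fun s : Setoid α ↦ s.r) fun _ _ h ↦
    Setoid.ext fun x y ↦ iff_of_eq (congrFun₂ h x y)

def Equiv.setoidCongr {α β : Type*} (e : α ≃ β) : Setoid α ≃ Setoid β where
  toFun s := s.comap e.symm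
  invFun s := s.comap e
  left_inv s := Setoid.ext fun x y ↦ by simp [Setoid.comap_rel]
  right_inv s := Setoid.ext fun x y ↦ by simp [Setoid.comap_rel]

theorem Nat.card_setoid_eq_bellNumber {α : Type*} {n : ℕ} (e : α ≃ Fin n) :
    Nat.card (Setoid α) = bellNumber n :=
  Nat.card_congr e.setoidCongr

namespace Setoid

variable {α : Type*}

open Classical in
/-- The equivalence relation on `Option α` whose class of `none` is `{none} ∪ some '' S` and
which agrees with `P` off `S`. -/
noncomputable def withNoneBlock (S : Finset α) (P : Setoid {x // x ∉ S}) : Setoid (Option α) :=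
  ker fun a : Option α ↦ a.bind fun x ↦
    if h : x ∈ S then none else some (Quotient.mk P ⟨x, h⟩)

theorem withNoneBlock_none_some (S : Finset α) (P : Setoid {x // x ∉ S}) (x : α) :
    withNoneBlock S P none (some x) ↔ x ∈ S := by
  rw [withNoneBlock, ker_def]
  by_cases h : x ∈ S <;> simp [h]

theorem withNoneBlock_some_some (S : Finset α) (P : Setoid {x // x ∉ S}) (x y : {x // x ∉ S}) :
    withNoneBlock S P (some x) (some y) ↔ P x y := by
  rw [withNoneBlock, ker_def]
  simp [x.2, y.2, Quotient.eq]

theorem withNoneBlock_injective :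
    Function.Injective fun p : Σ S : Finset α, Setoid {x // x ∉ S} ↦ withNoneBlock p.1 p.2 := by
  rintro ⟨S, P⟩ ⟨S', P'⟩ h
  have hr (a b) : withNoneBlock S P a b ↔ withNoneBlock S' P' a b := by simp only at h; rw [h]
  obtain rfl : S = S' := by
    ext x
    rw [← withNoneBlock_none_some S P, hr, withNoneBlock_none_some]
  obtain rfl : P = P' := by
    ext x y
    rw [← withNoneBlock_some_some S P, hr, withNoneBlock_some_some]
  rfl

end Setoid

theorem sum_choose_mul_bellNumber_le (n : ℕ) :
    ∑ i ≤ n, n.choose i * bellNumber (n - i) ≤ bellNumber (n + 1) := by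
  have hfiber (S : Finset (Fin n)) : Nat.card (Setoid {x // x ∉ S}) = bellNumber (n - #S) :=
    Nat.card_setoid_eq_bellNumber <| Fintype.equivFinOfCardEq <| by
      simp [Fintype.card_subtype_compl]
  have hsigma : Nat.card (Σ S : Finset (Fin n), Setoid {x // x ∉ S}) =
      ∑ i ≤ n, n.choose i * bellNumber (n - i) := by
    rw [Nat.card_sigma, ← Nat.range_succ_eq_Iic]
    simp only [hfiber]
    rw [← powerset_univ, sum_powerset_apply_card fun k ↦ bellNumber (n - k)]
    simp
  rw [← hsigma, ← Nat.card_setoid_eq_bellNumber (finSuccEquiv n).symm]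
  exact Nat.card_le_card_of_injective _ Setoid.withNoneBlock_injective

theorem Nat.bell_le_bellNumber (n : ℕ) : n.bell ≤ bellNumber n := by
  induction n using Nat.strong_induction_on with
  | _ n ih =>
    rcases n with _ | n
    · exact bell_zero ▸ Nat.card_pos (α := Setoid (Fin 0))
    · rw [bell_succ]
      refine le_trans ?_ (sum_choose_mul_bellNumber_le n)
      gcongr with i hi
      exact ih _ (by simp at hi; omega)

theorem Nat.sum_Iic_choose_mul_pow (a n : ℕ) :
    ∑ i ≤ n, n.choose i * a ^ (n - i) = (a + 1) ^ n := by
  rw [add_comm, add_pow, ← Nat.range_succ_eq_Iic]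
  exact sum_congr rfl fun i _ ↦ by simp [mul_comm]

theorem Nat.four_pow_succ_le_five_pow {n : ℕ} (hn : 7 ≤ n) : 4 ^ (n + 1) ≤ 5 ^ n := by
  induction n, hn using Nat.le_induction with
  | base => norm_num
  | succ n _ ih => rw [pow_succ, pow_succ 5]; omega

theorem Nat.four_pow_lt_mul_bell (n : ℕ) : 4 ^ n < 72 * n.bell := by
  induction n using Nat.strong_induction_on with
  | _ n ih =>
    rcases lt_or_ge n 8 with hn | hn
    · interval_cases n <;> decide +kernel
    obtain ⟨m, rfl⟩ := Nat.exists_eq_add_of_le' (show 1 ≤ n by omega)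
    calc 4 ^ (m + 1) < 5 ^ m + 2 ^ m :=
          (four_pow_succ_le_five_pow (by omega)).trans_lt (Nat.lt_add_of_pos_right (by positivity))
      _ = ∑ i ≤ m, m.choose i * (4 ^ (m - i) + 1) := by
          rw [show 5 ^ m + 2 ^ m = (4 + 1) ^ m + (1 + 1) ^ m from rfl, ← sum_Iic_choose_mul_pow,
            ← sum_Iic_choose_mul_pow, ← sum_add_distrib]
          simp only [one_pow, mul_add, mul_one]
      _ ≤ ∑ i ≤ m, m.choose i * (72 * (m - i).bell) := by
          gcongr with i hi
          exact ih _ (by omega)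
      _ = 72 * (m + 1).bell := by
          rw [bell_succ, mul_sum]
          exact sum_congr rfl fun i _ ↦ by ring

/-- The Bell number satisfies `B_l > 4^l / 72`, i.e. `72 · B_l > 4^l`. -/
theorem stmt_4 (l : ℕ) : 72 * bellNumber l > 4 ^ l :=
  calc 4 ^ l < 72 * l.bell := Nat.four_pow_lt_mul_bell l
    _ ≤ 72 * bellNumber l := Nat.mul_le_mul_left 72 (Nat.bell_le_bellNumber l)
end

section
/- Let A be a set, X ⊆ A, and s a permutation of A moving only finitely many points such that X meets every orbit of s or, more simply, such that for every x ∈ X some positive power of s maps x into X. Then the map s ▷ X : X → X defined by (s ▷ X)(x) = s^(i+1)(x), where i is the least natural number with s^(i+1)(x) ∈ X, is a well-defined permutation of X. -/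
/-!
A permutation with finite support has finite order, so every point of `X` returns to `X`
under both `s` and `s⁻¹`, and both first-return maps are defined.
If `s^(k+1) x` is the first return of `x ∈ X`, the intermediate points `s x, …, s^k x` avoid
`X`, so `x` is in turn the first return of `s^(k+1) x` under `s⁻¹`, after the same number of
steps. Hence the two first-return maps are mutually inverse.
-/

namespace Equiv.Perm

variable {A : Type*}

theorem isOfFinOrder_of_finite_support {s : Perm A} (hs : {a | s a ≠ a}.Finite) :
    IsOfFinOrder s := by
  classical
  have : Finite {a | s a ≠ a} := hs.to_subtype
  have hmem : ∀ a, s a ∈ {a | s a ≠ a} ↔ a ∈ {a | s a ≠ a} := fun a =>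
    s.injective.ne_iff
  rw [← ofSubtype_subtypePerm hmem fun _ ha => ha]
  exact ofSubtype.isOfFinOrder (isOfFinOrder_of_finite _)

variable (s : Perm A) (X : Set A)

theorem exists_pow_succ_apply_mem_of_isOfFinOrder (hs : IsOfFinOrder s) :
    ∀ x ∈ X, ∃ i : ℕ, (s ^ (i + 1)) x ∈ X := fun x hx =>
  ⟨orderOf s - 1, by rwa [Nat.sub_add_cancel hs.orderOf_pos, pow_orderOf_eq_one, one_apply]⟩

def IsFirstReturn (x : A) (k : ℕ) : Prop :=
  (∀ j < k, (s ^ (j + 1)) x ∉ X) ∧ (s ^ (k + 1)) x ∈ X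

variable {s X}

theorem IsFirstReturn.unique {x : A} {k l : ℕ} (hk : IsFirstReturn s X x k)
    (hl : IsFirstReturn s X x l) : k = l := by
  rcases lt_trichotomy k l with h | h | h
  · exact absurd hk.2 (hl.1 k h)
  · exact h
  · exact absurd hl.2 (hk.1 l h)

open Classical in
theorem isFirstReturn_find {x : A} (h : ∃ i : ℕ, (s ^ (i + 1)) x ∈ X) :
    IsFirstReturn s X x (Nat.find h) :=
  ⟨fun _ => Nat.find_min h, Nat.find_spec h⟩

theorem inv_pow_succ_apply_pow_succ {j k : ℕ} (hjk : j ≤ k) (x : A) :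
    (s⁻¹ ^ (j + 1)) ((s ^ (k + 1)) x) = (s ^ (k - j)) x := by
  rw [← mul_apply, inv_pow, show k + 1 = (j + 1) + (k - j) by omega, pow_add s (j + 1),
    inv_mul_cancel_left]

theorem IsFirstReturn.inv {x : A} {k : ℕ} (hx : x ∈ X) (h : IsFirstReturn s X x k) :
    IsFirstReturn s⁻¹ X ((s ^ (k + 1)) x) k := by
  refine ⟨fun j hj => ?_, ?_⟩
  · rw [inv_pow_succ_apply_pow_succ hj.le, show k - j = (k - j - 1) + 1 by omega]
    exact h.1 _ (by omega)
  · rwa [inv_pow_succ_apply_pow_succ le_rfl, Nat.sub_self, pow_zero, one_apply]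

variable (s X)

open Classical in
noncomputable def firstReturn (hX : ∀ x ∈ X, ∃ i : ℕ, (s ^ (i + 1)) x ∈ X) (x : X) : X :=
  ⟨(s ^ (Nat.find (hX x x.2) + 1)) x, Nat.find_spec (hX x x.2)⟩

theorem firstReturn_eq (hX : ∀ x ∈ X, ∃ i : ℕ, (s ^ (i + 1)) x ∈ X) {x : X} {k : ℕ}
    (h : IsFirstReturn s X x k) : (firstReturn s X hX x : A) = (s ^ (k + 1)) x :=
  congrArg (fun i => (s ^ (i + 1)) (x : A)) ((isFirstReturn_find (hX x x.2)).unique h)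

theorem firstReturn_inv_firstReturn (hX : ∀ x ∈ X, ∃ i : ℕ, (s ^ (i + 1)) x ∈ X)
    (hX' : ∀ x ∈ X, ∃ i : ℕ, (s⁻¹ ^ (i + 1)) x ∈ X) (x : X) :
    firstReturn s⁻¹ X hX' (firstReturn s X hX x) = x := by
  have h := isFirstReturn_find (hX x x.2)
  apply Subtype.ext
  rw [firstReturn_eq s⁻¹ X hX' (firstReturn_eq s X hX h ▸ h.inv x.2), firstReturn_eq s X hX h,
    inv_pow_succ_apply_pow_succ le_rfl, Nat.sub_self, pow_zero, one_apply]

noncomputable def firstReturnPerm (hs : IsOfFinOrder s) : Perm X where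
  toFun := firstReturn s X (exists_pow_succ_apply_mem_of_isOfFinOrder s X hs)
  invFun := firstReturn s⁻¹ X (exists_pow_succ_apply_mem_of_isOfFinOrder s⁻¹ X hs.inv)
  left_inv := firstReturn_inv_firstReturn s X _ _
  right_inv x := by
    simpa only [inv_inv] using firstReturn_inv_firstReturn s⁻¹ X _
      (by simpa only [inv_inv] using exists_pow_succ_apply_mem_of_isOfFinOrder s X hs) x

theorem firstReturnPerm_apply (hs : IsOfFinOrder s) {x : X} {k : ℕ}
    (h : IsFirstReturn s X x k) : (firstReturnPerm s X hs x : A) = (s ^ (k + 1)) x :=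
  firstReturn_eq s X (exists_pow_succ_apply_mem_of_isOfFinOrder s X hs) h

end Equiv.Perm

theorem stmt_6_general {A : Type*} (s : Equiv.Perm A) (X : Set A)
    (hfin : {a | s a ≠ a}.Finite) :
    ∃ e : Equiv.Perm X, ∀ (x : X) (i : ℕ),
      (∀ j < i, (s ^ (j + 1)) (x : A) ∉ X) → (s ^ (i + 1)) (x : A) ∈ X →
        (e x : A) = (s ^ (i + 1)) (x : A) :=
  ⟨s.firstReturnPerm X (Equiv.Perm.isOfFinOrder_of_finite_support hfin),
    fun _ _ hmin hret => s.firstReturnPerm_apply X _ ⟨hmin, hret⟩⟩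

/-- The first-return map `s ▷ X` is a well-defined permutation of `X`: there is a
permutation `e` of `X` such that `e x = s^(i+1) x` where `i` is the least natural
number with `s^(i+1) x ∈ X`. -/
theorem stmt_6 {A : Type*} (s : Equiv.Perm A) (X : Set A)
    (hfin : {a | s a ≠ a}.Finite)
    (hret : ∀ x ∈ X, ∃ i : ℕ, (s ^ (i + 1)) x ∈ X) :
    ∃ e : Equiv.Perm X, ∀ (x : X) (i : ℕ),
      (∀ j < i, (s ^ (j + 1)) (x : A) ∉ X) → (s ^ (i + 1)) (x : A) ∈ X →
        (e x : A) = (s ^ (i + 1)) (x : A) :=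
  stmt_6_general s X hfin
end

section
/- Let A be a set, C a finite set of finite subsets of A, and Q a partition of the quotient set D of ⋃C by the relation x ∼ y ⟺ ∀c ∈ C (x ∈ c ↔ y ∈ c). Then {⋃q | q ∈ Q} ∪ {{x} | x ∈ A \ ⋃C} is a partition of A into finite blocks, and distinct partitions Q of D yield distinct partitions of A. -/
/-- `P` is a partition of the set `X`: its blocks are nonempty subsets of `X`,
pairwise disjoint, with union `X`. -/
def IsPartitionOn {α : Type*} (X : Set α) (P : Set (Set α)) : Prop :=
  (∀ p ∈ P, p.Nonempty ∧ p ⊆ X) ∧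
  (∀ p ∈ P, ∀ q ∈ P, p ≠ q → p ∩ q = ∅) ∧ ⋃₀ P = X

/-!
The classes of `∼` partition `⋃C`, so merging the classes along a partition `Q` of `D`
partitions `⋃C`, and adding the singletons outside `⋃C` partitions `A`. A block of `Q` is
recovered from its union, since the classes are disjoint and nonempty, and the blocks coming
from `Q` are exactly those contained in `⋃C`; hence `Q` is determined by the resulting
partition of `A`.
-/

section

open Set

variable {α : Type*}

def complSingletons (X : Set α) : Set (Set α) := {p | ∃ x, x ∉ X ∧ p = {x}}

namespace IsPartitionOn

variable {X : Set α} {P : Set (Set α)}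

theorem eq_of_mem_of_mem (hP : IsPartitionOn X P) {p q : Set α} (hp : p ∈ P) (hq : q ∈ P)
    {a : α} (hap : a ∈ p) (haq : a ∈ q) : p = q := by
  by_contra hne
  have hempty : p ∩ q = ∅ := hP.2.1 p hp q hq hne
  exact hempty.subset ⟨hap, haq⟩

theorem sUnion_image {D : Set (Set α)} {Q : Set (Set (Set α))} (hD : IsPartitionOn X D)
    (hQ : IsPartitionOn D Q) : IsPartitionOn X (sUnion '' Q) := by
  refine ⟨?_, ?_, ?_⟩
  · rintro _ ⟨q, hq, rfl⟩
    obtain ⟨⟨u, hu⟩, hqD⟩ := hQ.1 q hq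
    obtain ⟨a, ha⟩ := (hD.1 u (hqD hu)).1
    refine ⟨⟨a, u, hu, ha⟩, sUnion_subset fun v hv => (hD.1 v (hqD hv)).2⟩
  · rintro _ ⟨q, hq, rfl⟩ _ ⟨q', hq', rfl⟩ hne
    refine eq_empty_of_forall_notMem fun a ⟨⟨u, hu, hau⟩, ⟨u', hu', hau'⟩⟩ => hne ?_
    have huu' : u = u' :=
      hD.eq_of_mem_of_mem ((hQ.1 q hq).2 hu) ((hQ.1 q' hq').2 hu') hau hau'
    rw [hQ.eq_of_mem_of_mem hq hq' hu (huu' ▸ hu')]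
  · rw [← hD.2.2, ← hQ.2.2]
    ext a
    simp only [mem_sUnion, mem_image]
    constructor
    · rintro ⟨_, ⟨q, hq, rfl⟩, u, hu, ha⟩
      exact ⟨u, ⟨q, hq, hu⟩, ha⟩
    · rintro ⟨u, ⟨q, hq, hu⟩, ha⟩
      exact ⟨_, ⟨q, hq, rfl⟩, u, hu, ha⟩

theorem sUnion_injOn {D : Set (Set α)} (hD : IsPartitionOn X D) : InjOn sUnion (𝒫 D) := by
  suffices ∀ q ∈ 𝒫 D, ∀ q' ∈ 𝒫 D, ⋃₀ q = ⋃₀ q' → q ⊆ q' from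
    fun q hq q' hq' h => (this q hq q' hq' h).antisymm (this q' hq' q hq h.symm)
  intro q hq q' hq' h u hu
  obtain ⟨a, ha⟩ := (hD.1 u (hq hu)).1
  obtain ⟨u', hu', hau'⟩ : a ∈ ⋃₀ q' := h ▸ ⟨u, hu, ha⟩
  rwa [hD.eq_of_mem_of_mem (hq hu) (hq' hu') ha hau']

theorem union_complSingletons (hP : IsPartitionOn X P) :
    IsPartitionOn univ (P ∪ complSingletons X) := by
  have hdisj : ∀ p ∈ P, ∀ x ∉ X, p ∩ {x} = ∅ := fun p hp x hx =>
    eq_empty_of_forall_notMem fun a ⟨hap, hax⟩ => hx (hax ▸ (hP.1 p hp).2 hap)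
  refine ⟨?_, ?_, ?_⟩
  · rintro p (hp | ⟨x, -, rfl⟩)
    exacts [⟨(hP.1 p hp).1, subset_univ p⟩, ⟨singleton_nonempty x, subset_univ _⟩]
  · rintro p (hp | ⟨x, hx, rfl⟩) q (hq | ⟨y, hy, rfl⟩) hne
    · exact hP.2.1 p hp q hq hne
    · exact hdisj p hp y hy
    · rw [inter_comm]; exact hdisj q hq x hx
    · exact singleton_inter_eq_empty.2 fun h => hne (h ▸ rfl)
  · refine eq_univ_of_forall fun a => ?_
    by_cases ha : a ∈ X
    · rw [← hP.2.2] at ha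
      obtain ⟨p, hp, hap⟩ := ha
      exact ⟨p, Or.inl hp, hap⟩
    · exact ⟨{a}, Or.inr ⟨a, ha, rfl⟩, rfl⟩

theorem sep_subset_union_complSingletons (hP : IsPartitionOn X P) :
    {p ∈ P ∪ complSingletons X | p ⊆ X} = P := by
  ext p
  constructor
  · rintro ⟨hp | ⟨x, hx, rfl⟩, hpX⟩
    exacts [hp, absurd (singleton_subset_iff.1 hpX) hx]
  · exact fun hp => ⟨Or.inl hp, (hP.1 p hp).2⟩

end IsPartitionOn

theorem isPartitionOn_classes (X : Set α) {r : α → α → Prop} (hr : Equivalence r) :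
    IsPartitionOn X {u | ∃ x ∈ X, u = {y ∈ X | r x y}} := by
  refine ⟨?_, ?_, ?_⟩
  · rintro _ ⟨x, hx, rfl⟩
    exact ⟨⟨x, hx, hr.refl x⟩, sep_subset X _⟩
  · rintro _ ⟨x, -, rfl⟩ _ ⟨x', -, rfl⟩ hne
    refine eq_empty_of_forall_notMem fun a ⟨⟨_, hxa⟩, ⟨_, hx'a⟩⟩ => hne ?_
    have hxx' : r x x' := hr.trans hxa (hr.symm hx'a)
    ext b
    exact and_congr_right fun _ => ⟨hr.trans (hr.symm hxx'), hr.trans hxx'⟩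
  · refine (sUnion_subset ?_).antisymm fun x hx => ⟨_, ⟨x, hx, rfl⟩, hx, hr.refl x⟩
    rintro _ ⟨x, -, rfl⟩
    exact sep_subset X _

end

/-- For `C` a finite set of finite subsets of `A`, `D` the quotient of `⋃₀ C` by the
relation of belonging to exactly the same members of `C`, and any partition `Q` of `D`,
the family `{⋃₀ q | q ∈ Q} ∪ {{x} | x ∈ A \ ⋃₀ C}` is a partition of `A` into finite
blocks, and distinct `Q`'s give distinct partitions of `A`. -/
theorem stmt_9 {A : Type*} (C : Set (Set A)) (hC : C.Finite)
    (hc : ∀ c ∈ C, c.Finite)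
    (D : Set (Set A))
    (hD : D = {u | ∃ x ∈ ⋃₀ C, u = {y ∈ ⋃₀ C | ∀ c ∈ C, (x ∈ c ↔ y ∈ c)}})
    (Φ : Set (Set (Set A)) → Set (Set A))
    (hΦ : ∀ Q, Φ Q = {p | ∃ q ∈ Q, p = ⋃₀ q} ∪ {p | ∃ x, x ∉ ⋃₀ C ∧ p = {x}}) :
    (∀ Q, IsPartitionOn D Q →
      IsPartitionOn (Set.univ : Set A) (Φ Q) ∧ ∀ p ∈ Φ Q, p.Finite) ∧
    Set.InjOn Φ {Q | IsPartitionOn D Q} := by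
  have hDpart : IsPartitionOn (⋃₀ C) D := hD ▸ isPartitionOn_classes (⋃₀ C)
    ⟨fun _ _ _ => Iff.rfl, fun h c hc => (h c hc).symm,
      fun h h' c hc => (h c hc).trans (h' c hc)⟩
  have hΦ' : ∀ Q, Φ Q = Set.sUnion '' Q ∪ complSingletons (⋃₀ C) := by
    intro Q
    rw [hΦ, complSingletons]
    simp only [Set.image, eq_comm]
  refine ⟨fun Q hQ => ⟨hΦ' Q ▸ (hDpart.sUnion_image hQ).union_complSingletons, ?_⟩, ?_⟩
  · rw [hΦ']
    rintro _ (⟨q, hq, rfl⟩ | ⟨x, -, rfl⟩)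
    exacts [(hC.sUnion hc).subset ((hDpart.sUnion_image hQ).1 _ ⟨q, hq, rfl⟩).2,
      Set.finite_singleton x]
  · intro Q hQ Q' hQ' h
    have hblocks := congrArg (fun P => {p ∈ P | p ⊆ ⋃₀ C}) h
    simp only [hΦ'] at hblocks
    rw [(hDpart.sUnion_image hQ).sep_subset_union_complSingletons,
      (hDpart.sUnion_image hQ').sep_subset_union_complSingletons] at hblocks
    exact (hDpart.sUnion_injOn.image_eq_image_iff (fun q hq => (hQ.1 q hq).2)
      (fun q hq => (hQ'.1 q hq).2)).1 hblocks
end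

section
/- For every infinite set A and natural numbers m, n with m ≥ n + 2, there is an injection from S_n(A) into S_m(A), where S_k(A) is the set of permutations of A moving exactly k points. -/
/-- `S_k(A)`: the set of permutations of `A` moving exactly `k` points. -/
def permsMovingExactly (A : Type*) (k : ℕ) : Set (Equiv.Perm A) :=
  {s | {a | s a ≠ a}.Finite ∧ {a | s a ≠ a}.ncard = k}

/-!
A permutation moving finitely many points is determined by the finite set of pairs
`(a, s a)` with `s a ≠ a`, so `#S_n(A) ≤ #(Finset (A × A)) = #A`. Conversely, identifying `A`
with `Fin m × A`, rotating the `m` points of a single fibre `Fin m × {a}` gives, for `m ≥ 2`,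
an injection `A → S_m(A)`. Hence `#S_n(A) ≤ #A ≤ #S_m(A)`.
-/

open Cardinal Equiv

namespace Equiv.Perm

variable {A B : Type*}

theorem apply_eq_of_image_graph_subset {s t : Perm A}
    (h : (fun a => (a, s a)) '' {a | s a ≠ a} ⊆ (fun a => (a, t a)) '' {a | t a ≠ a})
    {a : A} (ha : s a ≠ a) : s a = t a := by
  obtain ⟨b, -, hb⟩ := h ⟨a, ha, rfl⟩
  rw [Prod.mk.injEq] at hb
  rw [← hb.2, hb.1]

theorem eq_of_image_graph_eq {s t : Perm A}
    (h : (fun a => (a, s a)) '' {a | s a ≠ a} = (fun a => (a, t a)) '' {a | t a ≠ a}) :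
    s = t := by
  ext a
  by_cases hs : s a = a
  · by_cases ht : t a = a
    · rw [hs, ht]
    · exact (apply_eq_of_image_graph_subset h.ge ht).symm
  · exact apply_eq_of_image_graph_subset h.le hs

theorem setOf_permCongr_apply_ne (e : A ≃ B) (s : Perm A) :
    {b | e.permCongr s b ≠ b} = e '' {a | s a ≠ a} := by
  ext b
  simp [Equiv.image_eq_preimage_symm, Equiv.permCongr_apply, ← e.eq_symm_apply]

end Equiv.Perm

def permsMovingExactlyCongr {A B : Type*} (e : A ≃ B) (k : ℕ) :
    permsMovingExactly A k ≃ permsMovingExactly B k :=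
  e.permCongr.subtypeEquiv fun s => by
    simp only [permsMovingExactly, Set.mem_ofPred_eq, Perm.setOf_permCongr_apply_ne,
      Set.finite_image_iff e.injective.injOn, Set.ncard_image_of_injective _ e.injective]

theorem mk_permsMovingExactly_le (A : Type*) [Infinite A] (k : ℕ) :
    #(permsMovingExactly A k) ≤ #A :=
  calc #(permsMovingExactly A k) ≤ #(Finset (A × A)) :=
        mk_le_of_injective (f := fun s => (s.2.1.image fun a => (a, s.1 a)).toFinset)
          fun _ _ h => Subtype.ext (Perm.eq_of_image_graph_eq (Set.Finite.toFinset_inj.mp h))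
    _ = #A := by rw [mk_finset_of_infinite, mk_prod, lift_id, mul_eq_self (aleph0_le_mk A)]

section FiberRotation

variable {B : Type*} [DecidableEq B] {m : ℕ}

def fiberRotation (m : ℕ) (b : B) : Perm (Fin m × B) :=
  prodCongrLeft fun b' => if b' = b then finRotate m else 1

theorem setOf_fiberRotation_apply_ne (hm : 2 ≤ m) (b : B) :
    {x | fiberRotation m b x ≠ x} = Set.univ ×ˢ {b} := by
  ext ⟨i, b'⟩
  have hrot : finRotate m i ≠ i := Perm.mem_support.mp (by simp [support_finRotate_of_le hm])
  by_cases hb : b' = b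
  · simpa [fiberRotation, hb] using hrot
  · simp [fiberRotation, hb]

theorem fiberRotation_mem_permsMovingExactly (hm : 2 ≤ m) (b : B) :
    fiberRotation m b ∈ permsMovingExactly (Fin m × B) m := by
  rw [permsMovingExactly, Set.mem_ofPred_eq, setOf_fiberRotation_apply_ne hm]
  refine ⟨Set.finite_univ.prod (Set.finite_singleton b), ?_⟩
  rw [Set.ncard_prod, Set.ncard_univ, Set.ncard_singleton, Nat.card_fin, mul_one]

theorem fiberRotation_injective (hm : 2 ≤ m) :
    Function.Injective (fiberRotation m : B → Perm (Fin m × B)) := by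
  intro b b' h
  have hmem : ((⟨0, by omega⟩ : Fin m), b) ∈ {x | fiberRotation m b x ≠ x} := by
    simp [setOf_fiberRotation_apply_ne hm]
  rw [h, setOf_fiberRotation_apply_ne hm] at hmem
  exact hmem.2

end FiberRotation

theorem mk_le_mk_permsMovingExactly (A : Type*) [Infinite A] {m : ℕ} (hm : 2 ≤ m) :
    #A ≤ #(permsMovingExactly A m) := by
  classical
  have hcard : #(Fin m × A) = #A := by
    rw [mk_prod, mk_fin, lift_natCast, lift_uzero]
    exact mul_eq_right (aleph0_le_mk A) (natCast_lt_aleph0.le.trans (aleph0_le_mk A))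
      (Nat.cast_ne_zero.mpr (by omega))
  obtain ⟨e⟩ := Cardinal.eq.mp hcard
  calc #A ≤ #(permsMovingExactly (Fin m × A) m) :=
        mk_le_of_injective (f := fun a => ⟨_, fiberRotation_mem_permsMovingExactly hm a⟩)
          fun _ _ h => fiberRotation_injective hm (congrArg Subtype.val h)
    _ = #(permsMovingExactly A m) := mk_congr (permsMovingExactlyCongr e m)

/-- For every infinite set `A` and `m ≥ n + 2`, there is an injection from
`S_n(A)` into `S_m(A)`. -/
theorem stmt_10 (A : Type*) [Infinite A] (m n : ℕ) (h : m ≥ n + 2) :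
    ∃ f : permsMovingExactly A n → permsMovingExactly A m, Function.Injective f := by
  obtain ⟨f⟩ := le_def _ _ |>.mp <|
    (mk_permsMovingExactly_le A n).trans (mk_le_mk_permsMovingExactly A (by omega : 2 ≤ m))
  exact ⟨f, f.injective⟩
end

section
/- For every infinite set A and natural number n ≥ 1, there is an injection from A^n into S_{n+1}(A), the set of permutations of A moving exactly n + 1 points. -/
/-! Since `A` is infinite, `A^n × Fin (n + 1)` embeds into `A`, so `A` contains pairwise disjoint
`(n + 1)`-element blocks indexed by `A^n`. Sending `v` to a cyclic permutation of its block gives a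
permutation moving exactly `n + 1` points, and `v` is recovered from the set of points it moves. -/

theorem List.setOf_formPerm_apply_ne {α : Type*} [DecidableEq α] {l : List α} (hl : l.Nodup)
    (hlen : 2 ≤ l.length) : {x | l.formPerm x ≠ x} = {x | x ∈ l} := by
  ext x
  by_cases hx : x ∈ l
  · simp [hx, List.formPerm_apply_mem_ne_self_iff l hl x hx, hlen]
  · simp [hx, List.formPerm_apply_of_notMem hx]

theorem List.formPerm_mem_permsMovingExactly {α : Type*} [DecidableEq α] {l : List α}
    (hl : l.Nodup) (hlen : 2 ≤ l.length) : l.formPerm ∈ permsMovingExactly α l.length := by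
  have hmoved : {x | l.formPerm x ≠ x} = l.toFinset := by
    rw [List.setOf_formPerm_apply_ne hl hlen, List.coe_toFinset]
  rw [permsMovingExactly, Set.mem_ofPred_eq, hmoved, Set.ncard_coe_finset,
    List.toFinset_card_of_nodup hl]
  exact ⟨Finset.finite_toSet _, rfl⟩

open Cardinal in
theorem nonempty_pi_fin_prod_fin_embedding (A : Type*) [Infinite A] (n k : ℕ) :
    Nonempty ((Fin n → A) × Fin k ↪ A) := by
  rw [← Cardinal.le_def]
  have hA := aleph0_le_mk A
  calc #((Fin n → A) × Fin k) = #A ^ n * k := by simp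
    _ ≤ max (max (#A ^ n) k) ℵ₀ := mul_le_max _ _
    _ ≤ #A := max_le (max_le (power_nat_le hA) (natCast_lt_aleph0.le.trans hA)) hA

section FiberCycle

variable {X A : Type*} {k : ℕ} (e : X × Fin k ↪ A)

theorem nodup_ofFn_fiber (x : X) : (List.ofFn fun i => e (x, i)).Nodup :=
  List.nodup_ofFn_ofInjective fun _ _ h => (Prod.ext_iff.mp (e.injective h)).2

variable [DecidableEq A]

def fiberCycle (x : X) : Equiv.Perm A :=
  (List.ofFn fun i => e (x, i)).formPerm

theorem fiberCycle_mem_permsMovingExactly (hk : 2 ≤ k) (x : X) :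
    fiberCycle e x ∈ permsMovingExactly A k := by
  have h := List.formPerm_mem_permsMovingExactly (nodup_ofFn_fiber e x) (by rwa [List.length_ofFn])
  rwa [List.length_ofFn] at h

theorem setOf_fiberCycle_apply_ne (hk : 2 ≤ k) (x : X) :
    {a | fiberCycle e x a ≠ a} = Set.range fun i => e (x, i) := by
  ext a
  rw [fiberCycle, List.setOf_formPerm_apply_ne (nodup_ofFn_fiber e x) (by rwa [List.length_ofFn]),
    Set.mem_ofPred_eq, List.mem_ofFn']

theorem fiberCycle_injective (hk : 2 ≤ k) : Function.Injective (fiberCycle e) := by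
  intro x y h
  have hmem : e (x, ⟨0, by omega⟩) ∈ Set.range fun i => e (y, i) := by
    rw [← setOf_fiberCycle_apply_ne e hk, ← h, setOf_fiberCycle_apply_ne e hk]
    exact Set.mem_range_self _
  obtain ⟨i, hi⟩ := hmem
  exact (Prod.ext_iff.mp (e.injective hi)).1.symm

end FiberCycle

/-- For every infinite set `A` and `n ≥ 1`, there is an injection from `A^n` into
`S_{n+1}(A)`. -/
theorem stmt_11 (A : Type*) [Infinite A] (n : ℕ) (hn : 1 ≤ n) :
    ∃ f : (Fin n → A) → permsMovingExactly A (n + 1), Function.Injective f := by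
  classical
  obtain ⟨e⟩ := nonempty_pi_fin_prod_fin_embedding A n (n + 1)
  exact ⟨fun v => ⟨fiberCycle e v, fiberCycle_mem_permsMovingExactly e (by omega) v⟩,
    fun v w h => fiberCycle_injective e (by omega) (congrArg Subtype.val h)⟩
end

section
/- For every infinite set A and natural number n, there is no boundedly finite-to-one function from the set S(A) of all permutations of A to the set S_{≤n}(A) of permutations of A moving at most n points. -/
/-!
A finitely supported permutation is determined by its graph off the diagonal, a finite subset of
`A × A`; so `S_{≤n}(A)` has cardinality at most `|A|`. A map with finite fibres into it would give
`|S(A)| ≤ |A| · ℵ₀ = |A|`, contradicting `|S(A)| = 2 ^ |A| > |A|`.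
-/

/-- `f` is boundedly finite-to-one: some `k` bounds the size of every fiber. -/
def BddFinToOne {α β : Type*} (f : α → β) : Prop :=
  ∃ k : ℕ, ∀ b : β, (f ⁻¹' {b}).Finite ∧ (f ⁻¹' {b}).ncard ≤ k

open Cardinal

namespace Equiv.Perm

variable {A : Type*}

def movedGraph (s : Perm A) : Set (A × A) := (fun a => (a, s a)) '' {a | s a ≠ a}

theorem mem_movedGraph {s : Perm A} {a b : A} :
    (a, b) ∈ s.movedGraph ↔ s a ≠ a ∧ s a = b := by
  simp [movedGraph]

theorem movedGraph_injective : Function.Injective (movedGraph (A := A)) := by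
  have key : ∀ {s t : Perm A}, s.movedGraph = t.movedGraph → ∀ a, s a ≠ a → t a = s a :=
    fun h a ha => (mem_movedGraph.1 (h ▸ mem_movedGraph.2 ⟨ha, rfl⟩)).2
  intro s t h
  ext a
  by_cases hs : s a = a
  · by_cases ht : t a = a
    · rw [hs, ht]
    · exact key h.symm a ht
  · exact (key h a hs).symm

theorem mk_setOf_finite_moved_le [Infinite A] : #{s : Perm A | {a | s a ≠ a}.Finite} ≤ #A := by
  let graph : {s : Perm A | {a | s a ≠ a}.Finite} → {S : Set (A × A) // S.Finite} :=
    fun s => ⟨s.1.movedGraph, s.2.image _⟩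
  have graph_injective : Function.Injective graph := fun s t h =>
    Subtype.ext (movedGraph_injective (congrArg Subtype.val h))
  calc #{s : Perm A | {a | s a ≠ a}.Finite}
      ≤ #{S : Set (A × A) // S.Finite} := mk_le_of_injective graph_injective
    _ = #(Finset (A × A)) := (mk_congr OrderIso.finsetSetFinite.toEquiv).symm
    _ = #A := by rw [mk_finset_of_infinite, mk_prod, lift_id, mul_eq_self (aleph0_le_mk A)]

end Equiv.Perm

/-- For every infinite set `A` and natural number `n`, there is no boundedly
finite-to-one function from `S(A)` to `S_{≤n}(A)`. -/
theorem stmt_12 (A : Type*) [Infinite A] (n : ℕ)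
    (f : Equiv.Perm A → {s : Equiv.Perm A | {a | s a ≠ a}.Finite ∧ {a | s a ≠ a}.ncard ≤ n}) :
    ¬ BddFinToOne f := by
  rintro ⟨k, hk⟩
  have hcod : #{s : Equiv.Perm A | {a | s a ≠ a}.Finite ∧ {a | s a ≠ a}.ncard ≤ n} ≤ #A :=
    (mk_subtype_mono fun _ hs => hs.1).trans Equiv.Perm.mk_setOf_finite_moved_le
  have hperm : #(Equiv.Perm A) ≤ #A :=
    calc #(Equiv.Perm A) ≤ _ * ℵ₀ :=
          mk_le_mk_mul_of_mk_preimage_le f fun b => (hk b).1.lt_aleph0.le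
      _ ≤ #A * ℵ₀ := by gcongr
      _ = #A := mk_mul_aleph0_eq
  exact (cantor #A).not_ge (mk_perm_eq_two_power (α := A) ▸ hperm)
end

section
/- For every infinite set A, there is no boundedly finite-to-one function from B(A), the set of partitions of A all of whose blocks are finite, to fin(A), the set of finite subsets of A. -/
/-- `P` is a partition of `A` all of whose blocks are finite. -/
def IsFinitePartition (A : Type*) (P : Set (Set A)) : Prop :=
  (∀ p ∈ P, p.Nonempty ∧ p.Finite) ∧
  (∀ p ∈ P, ∀ q ∈ P, p ≠ q → p ∩ q = ∅) ∧ ⋃₀ P = Set.univ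

/-!
Write `A ≃ A × Bool`. Each `S ⊆ A` gives a partition of `A` into blocks of size at most two,
gluing the two copies of `a` exactly when `a ∈ S`, and different `S` give different partitions;
so `B(A)` has at least `2 ^ #A` elements. A boundedly finite-to-one map into the infinite set
`fin(A)`, which has `#A` elements, would force `#B(A) ≤ #A`, contradicting Cantor's theorem.
-/

open Cardinal

universe u

section Gluing

variable {α β : Type*}

theorem isFinitePartition_classes (r : Setoid α) (hr : ∀ a, {x | r x a}.Finite) :
    IsFinitePartition α r.classes := by
  have hc := Setoid.isPartition_classes r
  refine ⟨?_, fun p hp q hq hpq => ?_, hc.sUnion_eq_univ⟩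
  · rintro _ ⟨a, rfl⟩
    exact ⟨⟨a, r.refl a⟩, hr a⟩
  · exact Set.disjoint_iff_inter_eq_empty.1 (hc.pairwiseDisjoint hp hq hpq)

/-- Glues `e⁻¹ (b, false)` to `e⁻¹ (b, true)` exactly when `b ∈ S`. -/
def gluingSetoid (e : α ≃ β × Bool) (S : Set β) : Setoid α :=
  Setoid.ker fun x => ((e x).1, (e x).2 = true ∨ (e x).1 ∈ S)

theorem finite_setOf_gluingSetoid (e : α ≃ β × Bool) (S : Set β) (a : α) :
    {x | gluingSetoid e S x a}.Finite := by
  refine ((Set.finite_range fun b => ((e a).1, b)).preimage e.injective.injOn).subset ?_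
  intro x hx
  exact ⟨(e x).2, Prod.ext (congrArg Prod.fst hx).symm rfl⟩

theorem gluingSetoid_injective (e : α ≃ β × Bool) : Function.Injective (gluingSetoid e) := by
  intro S T h
  ext b
  have hb := Setoid.ext_iff.1 h (e.symm (b, false)) (e.symm (b, true))
  unfold gluingSetoid at hb
  simpa [Setoid.ker_def] using hb

end Gluing

theorem nonempty_equiv_prod_bool (A : Type*) [Infinite A] : Nonempty (A ≃ A × Bool) := by
  rw [← Cardinal.eq, mk_prod, mk_bool, lift_uzero, lift_ofNat]
  exact (mul_eq_left (aleph0_le_mk A) ((natCast_lt_aleph0 (n := 2)).le.trans (aleph0_le_mk A))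
    two_ne_zero).symm

theorem mk_set_le_mk_finitePartitions (A : Type*) [Infinite A] :
    #(Set A) ≤ #{P : Set (Set A) // IsFinitePartition A P} := by
  obtain ⟨e⟩ := nonempty_equiv_prod_bool A
  refine mk_le_of_injective (f := fun S =>
    ⟨(gluingSetoid e S).classes, isFinitePartition_classes _ (finite_setOf_gluingSetoid e S)⟩)
    fun S T h => ?_
  exact gluingSetoid_injective e (Setoid.classes_inj.2 (congrArg Subtype.val h))

theorem BddFinToOne.mk_le {α β : Type u} {f : α → β} (hf : BddFinToOne f) [Infinite β] :
    #α ≤ #β := by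
  obtain ⟨k, hk⟩ := hf
  have hfiber (b : β) : #(f ⁻¹' {b}) ≤ k := by
    have := (hk b).1.to_subtype
    rw [← Nat.cast_card, Nat.card_coe_set_eq]
    exact_mod_cast (hk b).2
  calc #α ≤ #β * k := mk_le_mk_mul_of_mk_preimage_le f hfiber
    _ ≤ #β := mul_le_of_le (aleph0_le_mk β) le_rfl
      ((natCast_lt_aleph0 (n := k)).le.trans (aleph0_le_mk β))

theorem mk_setOf_finite (A : Type*) [Infinite A] : #{s : Set A // s.Finite} = #A := by
  rw [← mk_congr OrderIso.finsetSetFinite.toEquiv, mk_finset_of_infinite]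

/-- For every infinite set `A`, there is no boundedly finite-to-one function from
`B(A)`, the set of partitions of `A` into finite blocks, to `fin(A)`, the set of
finite subsets of `A`. -/
theorem stmt_14 (A : Type*) [Infinite A]
    (f : {P : Set (Set A) // IsFinitePartition A P} → {s : Set A // s.Finite}) :
    ¬ BddFinToOne f := by
  intro hf
  have : Infinite {s : Set A // s.Finite} :=
    Infinite.of_injective (fun a => ⟨{a}, Set.finite_singleton a⟩) fun a b h => by
      simpa using congrArg Subtype.val h
  have hle : #(Set A) ≤ #A := calc
    #(Set A) ≤ #{P : Set (Set A) // IsFinitePartition A P} := mk_set_le_mk_finitePartitions A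
    _ ≤ #{s : Set A // s.Finite} := hf.mk_le
    _ = #A := mk_setOf_finite A
  exact (mk_set (α := A) ▸ cantor #A).not_ge hle
end

section
/- For every infinite set A and natural number n, there is no boundedly finite-to-one function from B(A) to S_{≤n}(A), and no boundedly finite-to-one function from B(A) to A^n. -/
/-!
A boundedly finite-to-one map `f : α → β` has finite fibers, so `#α ≤ #β * ℵ₀`. For infinite `A`,
both `S_{≤n}(A)` and `A^n` have cardinality at most `#A`, whereas `B(A)` has cardinality `2 ^ #A`:
writing `A ≃ A × Bool`, each `S ⊆ A` gives the partition whose blocks are the pairs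
`{(a, false), (a, true)}` for `a ∈ S` and singletons otherwise. Cantor's theorem concludes.
-/

open Cardinal

universe u

lemma Cardinal.mk_le_mul_aleph0_of_finite_fibers {α β : Type u} (f : α → β)
    (hf : ∀ b, (f ⁻¹' {b}).Finite) : #α ≤ #β * ℵ₀ :=
  mk_le_mk_mul_of_mk_preimage_le f fun b => (hf b).countable.le_aleph0

section FinitePartitions

variable {A : Type*}

lemma Setoid.IsPartition.isFinitePartition {P : Set (Set A)} (hP : Setoid.IsPartition P)
    (hfin : ∀ p ∈ P, p.Finite) : IsFinitePartition A P :=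
  ⟨fun p hp => ⟨Setoid.nonempty_of_mem_partition hP hp, hfin p hp⟩,
    fun _ hp _ hq hpq => Set.disjoint_iff_inter_eq_empty.mp (hP.pairwiseDisjoint hp hq hpq),
    hP.sUnion_eq_univ⟩

lemma isFinitePartition_classes_ker {B : Type*} {f : A → B} (hf : ∀ b, (f ⁻¹' {b}).Finite) :
    IsFinitePartition A (Setoid.ker f).classes := by
  refine (Setoid.isPartition_classes _).isFinitePartition ?_
  rintro _ ⟨y, rfl⟩
  exact hf (f y)

open Classical in
noncomputable def glueOn (S : Set A) (p : A × Bool) : A × Bool :=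
  if p.1 ∈ S then (p.1, false) else p

lemma finite_glueOn_fiber (S : Set A) (q : A × Bool) : (glueOn S ⁻¹' {q}).Finite := by
  refine ((Set.finite_singleton q.1).prod Set.finite_univ).subset ?_
  rintro ⟨a, b⟩ rfl
  by_cases ha : a ∈ S <;> simp [glueOn, ha]

lemma glueOn_eq_iff_mem (S : Set A) (a : A) :
    glueOn S (a, false) = glueOn S (a, true) ↔ a ∈ S := by
  by_cases ha : a ∈ S <;> simp [glueOn, ha]

lemma two_power_le_mk_finitePartitions [Infinite A] :
    2 ^ #A ≤ #{P : Set (Set A) // IsFinitePartition A P} := by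
  obtain ⟨e⟩ : Nonempty (A ≃ A × Bool) := by
    rw [← Cardinal.eq, mk_prod, mk_bool, lift_uzero, lift_ofNat,
      mul_eq_left (aleph0_le_mk A) (ofNat_le_aleph0.trans (aleph0_le_mk A)) two_ne_zero]
  let partitionOf (S : Set A) : {P : Set (Set A) // IsFinitePartition A P} :=
    ⟨(Setoid.ker (glueOn S ∘ e)).classes, isFinitePartition_classes_ker fun q => by
      rw [Set.preimage_comp]
      exact (finite_glueOn_fiber S q).preimage e.injective.injOn⟩
  have partitionOf_injective : Function.Injective partitionOf := by
    intro S T hST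
    have hker := Setoid.classes_inj.mpr (congrArg Subtype.val hST)
    ext a
    have := Setoid.ext_iff.mp hker (e.symm (a, false)) (e.symm (a, true))
    simpa only [Setoid.ker_def, Function.comp_apply, Equiv.apply_symm_apply,
      glueOn_eq_iff_mem] using this
  rw [← mk_set]
  exact mk_le_of_injective partitionOf_injective

end FinitePartitions

lemma Function.eq_of_image_graph_nonFixed_eq {α : Type*} {f g : α → α}
    (h : (fun a => (a, f a)) '' {a | f a ≠ a} = (fun a => (a, g a)) '' {a | g a ≠ a}) :
    f = g := by
  have agree : ∀ {f g : α → α},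
      (fun a => (a, f a)) '' {a | f a ≠ a} = (fun a => (a, g a)) '' {a | g a ≠ a} →
        ∀ a, f a ≠ a → g a = f a := by
    intro f g h a ha
    obtain ⟨b, -, hb⟩ : (a, f a) ∈ (fun a => (a, g a)) '' {a | g a ≠ a} := h ▸ ⟨a, ha, rfl⟩
    obtain ⟨rfl, hb⟩ := Prod.ext_iff.mp hb
    exact hb
  funext a
  by_cases hf : f a = a
  · by_cases hg : g a = a
    · rw [hf, hg]
    · exact agree h.symm a hg
  · exact (agree h a hf).symm

lemma mk_finiteSupport_perm_le (A : Type u) [Infinite A] :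
    #{s : Equiv.Perm A | {a | s a ≠ a}.Finite} ≤ #A := by
  let graph (s : {s : Equiv.Perm A | {a | s a ≠ a}.Finite}) : Finset (A × A) :=
    (s.2.image fun a => (a, s.1 a)).toFinset
  have graph_injective : Function.Injective graph := fun s t hst =>
    Subtype.ext <| Equiv.ext <| congrFun <|
      Function.eq_of_image_graph_nonFixed_eq (Set.Finite.toFinset_inj.mp hst)
  calc #{s : Equiv.Perm A | {a | s a ≠ a}.Finite}
      ≤ #(Finset (A × A)) := mk_le_of_injective graph_injective
    _ = #A := by rw [mk_finset_of_infinite, mk_prod, lift_id, mul_eq_self (aleph0_le_mk A)]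

lemma not_bddFinToOne_of_mk_le {A β : Type u} [Infinite A] (hβ : #β ≤ #A)
    (f : {P : Set (Set A) // IsFinitePartition A P} → β) : ¬ BddFinToOne f := by
  rintro ⟨k, hk⟩
  have := calc
    2 ^ #A ≤ #{P : Set (Set A) // IsFinitePartition A P} := two_power_le_mk_finitePartitions
    _ ≤ #β * ℵ₀ := mk_le_mul_aleph0_of_finite_fibers f fun b => (hk b).1
    _ ≤ #A * ℵ₀ := mul_le_mul_left hβ ℵ₀
    _ = #A := mul_aleph0_eq (aleph0_le_mk A)
  exact (cantor #A).not_ge this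

/-- For every infinite set `A` and natural number `n`, there is no boundedly
finite-to-one function from `B(A)` to `S_{≤n}(A)`, and none from `B(A)` to `A^n`. -/
theorem stmt_15 (A : Type*) [Infinite A] (n : ℕ) :
    (∀ f : {P : Set (Set A) // IsFinitePartition A P} →
        {s : Equiv.Perm A | {a | s a ≠ a}.Finite ∧ {a | s a ≠ a}.ncard ≤ n},
      ¬ BddFinToOne f) ∧
    (∀ f : {P : Set (Set A) // IsFinitePartition A P} → (Fin n → A),
      ¬ BddFinToOne f) := by
  refine ⟨fun f => not_bddFinToOne_of_mk_le ?_ f, fun f => not_bddFinToOne_of_mk_le ?_ f⟩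
  · exact (mk_le_mk_of_subset fun s hs => hs.1).trans (mk_finiteSupport_perm_le A)
  · simpa only [mk_arrow, mk_fin, lift_natCast, lift_uzero, lift_id] using
      pow_le (aleph0_le_mk A) natCast_lt_aleph0
end

section
/- Let s be a permutation of a set A with finite support and let C ⊆ A be finite with the following property: every x ∈ mov(s) \ C satisfies s(x) ∈ C. If furthermore every point of mov(s) \ C has its s-preimage in C, then s is uniquely determined by the pair (s ▷ C, {x ∈ C | s(x) ∈ A \ C}) together with the values of s on {x ∈ C | s(x) ∉ C}; formally: if s, t are two such permutations with s ▷ C = t ▷ C, {x ∈ C | s(x) ∉ C} = {x ∈ C | t(x) ∉ C}, and s(x) = t(x) for all x ∈ C with s(x) ∉ C, then s = t. -/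
/-!
On `C`, `s` is read off from the return map where it stays in `C` and from the exit values
where it leaves. A point `x ∉ C` moved by `s` is entered from the exit point `y = s⁻¹ x ∈ C`
and left straight back into `C`, so `s x = s² y` is the return-map value at `y`; the same holds
for `t`, with the same `y` because `s` and `t` agree on `C`. By symmetry, a point outside `C`
is moved by `s` iff it is moved by `t`.
-/

namespace Equiv.Perm

variable {A : Type*} {s t : Perm A} {C : Set A} {x : A}

/-- `i + 1` is the first time the `s`-orbit of `x` comes back to `C`, so `(s ^ (i + 1)) x` is
the value of the induced permutation `s ▷ C` at `x`. -/
def IsFirstReturnTime (s : Perm A) (C : Set A) (x : A) (i : ℕ) : Prop :=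
  (s ^ (i + 1)) x ∈ C ∧ ∀ i' < i, (s ^ (i' + 1)) x ∉ C

lemma isFirstReturnTime_zero_iff : IsFirstReturnTime s C x 0 ↔ s x ∈ C := by
  simp [IsFirstReturnTime]

lemma isFirstReturnTime_one_iff : IsFirstReturnTime s C x 1 ↔ s (s x) ∈ C ∧ s x ∉ C := by
  simp [IsFirstReturnTime, pow_two]

lemma apply_mem_iff_of_exits_eq (hbd : {x ∈ C | s x ∉ C} = {x ∈ C | t x ∉ C}) (hx : x ∈ C) :
    s x ∈ C ↔ t x ∈ C := by
  have := congrArg (x ∈ ·) hbd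
  simp only [Set.mem_ofPred_eq, hx, true_and, eq_iff_iff] at this
  exact not_iff_not.mp this

lemma eqOn_of_firstReturn_eq
    (hret : ∀ x ∈ C, ∀ i j, IsFirstReturnTime s C x i → IsFirstReturnTime t C x j →
      (s ^ (i + 1)) x = (t ^ (j + 1)) x)
    (hbd : {x ∈ C | s x ∉ C} = {x ∈ C | t x ∉ C}) (hval : ∀ x ∈ C, s x ∉ C → s x = t x) :
    Set.EqOn s t C := by
  intro x hx
  by_cases hsx : s x ∈ C
  · have htx := (apply_mem_iff_of_exits_eq hbd hx).mp hsx
    simpa using hret x hx 0 0 (isFirstReturnTime_zero_iff.mpr hsx)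
      (isFirstReturnTime_zero_iff.mpr htx)
  · exact hval x hx hsx

lemma apply_eq_of_notMem_of_eqOn
    (hsC : ∀ x, s x ≠ x → x ∉ C → s x ∈ C ∧ s⁻¹ x ∈ C)
    (htC : ∀ x, t x ≠ x → x ∉ C → t x ∈ C ∧ t⁻¹ x ∈ C)
    (hret : ∀ x ∈ C, ∀ i j, IsFirstReturnTime s C x i → IsFirstReturnTime t C x j →
      (s ^ (i + 1)) x = (t ^ (j + 1)) x)
    (hEq : Set.EqOn s t C) (hx : x ∉ C) (hsx : s x ≠ x) : s x = t x := by
  obtain ⟨hsxC, hyC⟩ := hsC x hsx hx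
  set y := s⁻¹ x
  have hsy : s y = x := s.apply_symm_apply x
  have hty : t y = x := (hEq hyC).symm.trans hsy
  have htx : t x ≠ x := fun h ↦ hx (t.injective (hty.trans h.symm) ▸ hyC)
  have key := hret y hyC 1 1
    (isFirstReturnTime_one_iff.mpr ⟨hsy ▸ hsxC, hsy ▸ hx⟩)
    (isFirstReturnTime_one_iff.mpr ⟨hty ▸ (htC x htx hx).1, hty ▸ hx⟩)
  simpa only [one_add_one_eq_two, pow_two, mul_apply, hsy, hty] using key

end Equiv.Perm

open Equiv.Perm in
theorem stmt_18_general {A : Type*} (s t : Equiv.Perm A) (C : Set A)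
    (hsC : ∀ x, s x ≠ x → x ∉ C → s x ∈ C ∧ s⁻¹ x ∈ C)
    (htC : ∀ x, t x ≠ x → x ∉ C → t x ∈ C ∧ t⁻¹ x ∈ C)
    (hret : ∀ x ∈ C, ∀ i j : ℕ,
      (s ^ (i + 1)) x ∈ C → (∀ i' < i, (s ^ (i' + 1)) x ∉ C) →
      (t ^ (j + 1)) x ∈ C → (∀ j' < j, (t ^ (j' + 1)) x ∉ C) →
      (s ^ (i + 1)) x = (t ^ (j + 1)) x)
    (hbd : {x ∈ C | s x ∉ C} = {x ∈ C | t x ∉ C})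
    (hval : ∀ x ∈ C, s x ∉ C → s x = t x) :
    s = t := by
  have hret' : ∀ x ∈ C, ∀ i j, IsFirstReturnTime s C x i → IsFirstReturnTime t C x j →
      (s ^ (i + 1)) x = (t ^ (j + 1)) x :=
    fun x hx i j hi hj ↦ hret x hx i j hi.1 hi.2 hj.1 hj.2
  have hEq : Set.EqOn s t C := eqOn_of_firstReturn_eq hret' hbd hval
  ext x
  by_cases hx : x ∈ C
  · exact hEq hx
  by_cases hsx : s x ≠ x
  · exact apply_eq_of_notMem_of_eqOn hsC htC hret' hEq hx hsx
  by_cases htx : t x ≠ x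
  · exact (apply_eq_of_notMem_of_eqOn htC hsC
      (fun y hy i j hi hj ↦ (hret' y hy j i hj hi).symm) hEq.symm hx htx).symm
  rw [not_not.mp hsx, not_not.mp htx]

/-- A permutation `s` with finite support, such that every point moved by `s`
outside `C` is mapped into `C` by both `s` and `s⁻¹`, is determined by
`s ▷ C` (the first-return map on `C`), the set `{x ∈ C | s x ∉ C}`, and the
values of `s` on that set. -/
theorem stmt_18 {A : Type*} (s t : Equiv.Perm A) (C : Set A) (hCfin : C.Finite)
    (hs : {a | s a ≠ a}.Finite) (ht : {a | t a ≠ a}.Finite)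
    (hsC : ∀ x, s x ≠ x → x ∉ C → s x ∈ C ∧ s⁻¹ x ∈ C)
    (htC : ∀ x, t x ≠ x → x ∉ C → t x ∈ C ∧ t⁻¹ x ∈ C)
    (hret : ∀ x ∈ C, ∀ i j : ℕ,
      (s ^ (i + 1)) x ∈ C → (∀ i' < i, (s ^ (i' + 1)) x ∉ C) →
      (t ^ (j + 1)) x ∈ C → (∀ j' < j, (t ^ (j' + 1)) x ∉ C) →
      (s ^ (i + 1)) x = (t ^ (j + 1)) x)
    (hbd : {x ∈ C | s x ∉ C} = {x ∈ C | t x ∉ C})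
    (hval : ∀ x ∈ C, s x ∉ C → s x = t x) :
    s = t :=
  stmt_18_general s t C hsC htC hret hbd hval
end

section
/- In the basic Fraenkel permutation model (or, abstractly: for the set A of atoms with the full symmetric group acting, and any finite-to-one function f from S_n(A) to S_{n+1}(A) with finite support E, where n > 1): for every s ∈ S_n(A) with mov(s) ⊆ A \ E, one has mov(s) ⊆ mov(f(s)) ⊆ mov(s) ∪ E. Consequently no such equivariant finite-to-one f exists, i.e., it is consistent with ZF that S_n(A) admits no finite-to-one map to S_{n+1}(A) for all n > 1. -/
/-!
If `E` supports `f`, then a transposition `(a b)` with `a, b ∉ E` commuting with `s` also commutes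
with `f s`. Let `s` move `n` atoms, none in `E`. An atom `a ∉ mov s ∪ E` moved by `f s` could be
swapped with any fresh atom `b`, so `f s` would move infinitely many atoms. An atom `a ∈ mov s`
fixed by `f s` would make the conjugates `(a b) s (a b)`, `b` fresh, infinitely many distinct
elements of the fiber of `f s` in `S_n(A)`. Hence `mov (f s) = mov s ∪ {e}` for a single `e`.
But `s` fixes `E` pointwise, so it commutes with `f s`; then `f s` preserves
`mov (f s) \ mov s = {e}`, i.e. fixes `e`, which is absurd.
-/

open Equiv

section

variable {A : Type*}

namespace Equiv

lemma commute_swap_of_apply_eq [DecidableEq A] {t : Perm A} {a b : A} (ha : t a = a)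
    (hb : t b = b) : Commute (swap a b) t :=
  (mul_inv_eq_iff_eq_mul.mp (by rw [← swap_apply_apply, ha, hb])).symm

lemma swap_apply_eq_self_of_notMem [DecidableEq A] {E : Set A} {a b : A} (ha : a ∉ E)
    (hb : b ∉ E) : ∀ e ∈ E, swap a b e = e := fun _ he =>
  swap_apply_of_ne_of_ne (ne_of_mem_of_not_mem he ha) (ne_of_mem_of_not_mem he hb)

end Equiv

namespace Equiv.Perm

lemma movedBy_conj (π σ : Perm A) :
    {a | (π * σ * π⁻¹) a ≠ a} = π '' {a | σ a ≠ a} := by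
  ext a
  rw [Set.mem_image_equiv]
  simp only [Set.mem_ofPred_eq, Perm.mul_apply, Perm.inv_def]
  exact not_congr π.eq_symm_apply.symm

lemma apply_ne_self_iff_of_commute {π t : Perm A} (h : Commute π t) (x : A) :
    t (π x) ≠ π x ↔ t x ≠ x := by
  rw [← Perm.mul_apply, ← h.eq, Perm.mul_apply, π.injective.ne_iff]

lemma exists_movedBy_eq (t : Finset A) (ht : 1 < t.card) :
    ∃ s : Perm A, {a | s a ≠ a} = t := by
  classical
  refine ⟨t.toList.formPerm, ?_⟩
  rw [List.support_formPerm_of_nodup' _ t.nodup_toList, Finset.toList_toFinset]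
  rintro x hx
  simp [← Finset.length_toList, hx] at ht

lemma injOn_swap_conj [DecidableEq A] {s : Perm A} {a : A} (ha : s a ≠ a) :
    Set.InjOn (fun b => swap a b * s * (swap a b)⁻¹) {b | s b = b} := by
  intro b (hb : s b = b) b' _ heq
  by_contra hne
  have hba : b ≠ a := fun h => ha (h ▸ hb)
  have hsab : s a ≠ b := fun h => hba (s.injective (h.trans hb.symm)).symm
  -- conjugation by `swap a b` moves `b`, conjugation by `swap a b'` fixes it
  have := congrArg (· b) heq
  simp [swap_apply_of_ne_of_ne, hba, hsab, ha, hne, hb] at this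

lemma movedBy_diff_ne_singleton_of_commute {s t : Perm A} (h : Commute s t) (e : A) :
    {a | t a ≠ a} \ {a | s a ≠ a} ≠ {e} := by
  intro hst
  have he : e ∈ {a | t a ≠ a} \ {a | s a ≠ a} := hst ▸ rfl
  have hte : t e ∈ {a | t a ≠ a} \ {a | s a ≠ a} :=
    ⟨(apply_ne_self_iff_of_commute (Commute.refl t) e).mpr he.1,
      fun hs => he.2 ((apply_ne_self_iff_of_commute h.symm e).mp hs)⟩
  rw [hst] at hte
  exact he.1 hte

end Equiv.Perm

/-- `E` is a support of `f` for the conjugation action of `Perm A`. -/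
def IsSupport (E : Set A) (f : Perm A → Perm A) : Prop :=
  ∀ π : Perm A, (∀ e ∈ E, π e = e) → ∀ s : Perm A, f (π * s * π⁻¹) = π * f s * π⁻¹

namespace IsSupport

variable {E : Set A} {f : Perm A → Perm A}

lemma commute_apply (hf : IsSupport E f) {π s : Perm A} (hπ : ∀ e ∈ E, π e = e)
    (h : Commute π s) : Commute π (f s) := by
  have hfs := hf π hπ s
  rw [h.mul_inv_cancel] at hfs
  exact mul_inv_eq_iff_eq_mul.mp hfs.symm

lemma movedBy_apply_subset_union [Infinite A] (hf : IsSupport E f) (hE : E.Finite) {s : Perm A}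
    (hs : {a | s a ≠ a}.Finite) (hfs : {a | f s a ≠ a}.Finite) :
    {a | f s a ≠ a} ⊆ {a | s a ≠ a} ∪ E := by
  classical
  intro a ha
  by_contra hout
  obtain ⟨b, hb⟩ := ((hs.union hE).union hfs).exists_notMem
  simp only [Set.mem_union, Set.mem_ofPred_eq, not_or, not_not] at hout hb
  have hcomm : Commute (swap a b) (f s) :=
    hf.commute_apply (swap_apply_eq_self_of_notMem hout.2 hb.1.2)
      (commute_swap_of_apply_eq hout.1 hb.1.1)
  have hfb := (Perm.apply_ne_self_iff_of_commute hcomm a).mpr ha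
  rw [swap_apply_left] at hfb
  exact hfb hb.2

lemma movedBy_subset_movedBy_apply [Infinite A] (hf : IsSupport E f) (hE : E.Finite)
    {s : Perm A} {n : ℕ} (hsE : Disjoint {a | s a ≠ a} E) (hs : {a | s a ≠ a}.Finite)
    (hsn : {a | s a ≠ a}.ncard = n) (hfs : {a | f s a ≠ a}.Finite)
    (hfiber :
      {s' : Perm A | {a | s' a ≠ a}.Finite ∧ {a | s' a ≠ a}.ncard = n ∧ f s' = f s}.Finite) :
    {a | s a ≠ a} ⊆ {a | f s a ≠ a} := by
  classical
  intro a ha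
  by_contra hfa
  have haE : a ∉ E := hsE.notMem_of_mem_left ha
  have hC : ({a | s a ≠ a} ∪ E ∪ {a | f s a ≠ a})ᶜ.Infinite :=
    ((hs.union hE).union hfs).infinite_compl
  refine (hC.image ((Perm.injOn_swap_conj ha).mono ?_)).mono ?_ hfiber
  · exact fun b hb => not_not.mp fun hsb => hb (.inl (.inl hsb))
  · rintro _ ⟨b, hb, rfl⟩
    simp only [Set.mem_compl_iff, Set.mem_union, Set.mem_ofPred_eq, not_or, not_not] at hb hfa
    refine ⟨?_, ?_, ?_⟩
    · rw [Perm.movedBy_conj]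
      exact hs.image _
    · rw [Perm.movedBy_conj, Set.ncard_image_of_injective _ (swap a b).injective, hsn]
    · rw [hf _ (swap_apply_eq_self_of_notMem haE hb.1.2) s]
      exact (commute_swap_of_apply_eq hfa hb.2).mul_inv_cancel

end IsSupport

end

/-- The support computation in the basic Fraenkel model, abstractly: if `n > 1`,
`A` is infinite, and `f` maps permutations moving exactly `n` points to permutations
moving exactly `n + 1` points, is finite-to-one on them, and is equivariant under all
permutations of `A` fixing a finite set `E` pointwise, then for every `s ∈ S_n(A)`
with support disjoint from `E` we have `mov(s) ⊆ mov(f s) ⊆ mov(s) ∪ E`, and in fact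
no such `f` can exist (a contradiction follows). -/
theorem stmt_19 (A : Type*) [Infinite A] (n : ℕ) (hn : 1 < n)
    (E : Set A) (hE : E.Finite)
    (f : Equiv.Perm A → Equiv.Perm A)
    (hmaps : ∀ s : Equiv.Perm A, {a | s a ≠ a}.Finite → {a | s a ≠ a}.ncard = n →
      {a | f s a ≠ a}.Finite ∧ {a | f s a ≠ a}.ncard = n + 1)
    (hfto : ∀ t : Equiv.Perm A,
      {s : Equiv.Perm A | {a | s a ≠ a}.Finite ∧ {a | s a ≠ a}.ncard = n ∧ f s = t}.Finite)
    (hequiv : ∀ π : Equiv.Perm A, (∀ e ∈ E, π e = e) →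
      ∀ s : Equiv.Perm A, f (π * s * π⁻¹) = π * f s * π⁻¹) :
    (∀ s : Equiv.Perm A, {a | s a ≠ a}.Finite → {a | s a ≠ a}.ncard = n →
      Disjoint {a | s a ≠ a} E →
      {a | s a ≠ a} ⊆ {a | f s a ≠ a} ∧ {a | f s a ≠ a} ⊆ {a | s a ≠ a} ∪ E) ∧
    False := by
  have hf : IsSupport E f := hequiv
  have hsupport : ∀ s : Perm A, {a | s a ≠ a}.Finite → {a | s a ≠ a}.ncard = n →
      Disjoint {a | s a ≠ a} E →
      {a | s a ≠ a} ⊆ {a | f s a ≠ a} ∧ {a | f s a ≠ a} ⊆ {a | s a ≠ a} ∪ E :=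
    fun s hs hsn hsE =>
      ⟨hf.movedBy_subset_movedBy_apply hE hsE hs hsn (hmaps s hs hsn).1 (hfto (f s)),
        hf.movedBy_apply_subset_union hE hs (hmaps s hs hsn).1⟩
  refine ⟨hsupport, ?_⟩
  obtain ⟨t, htE, htn⟩ := hE.infinite_compl.exists_subset_card_eq n
  obtain ⟨s, hst⟩ := Perm.exists_movedBy_eq t (htn ▸ hn)
  have hs : {a | s a ≠ a}.Finite := hst ▸ t.finite_toSet
  have hsn : {a | s a ≠ a}.ncard = n := by rw [hst, Set.ncard_coe_finset, htn]
  have hsE : Disjoint {a | s a ≠ a} E := hst ▸ Set.subset_compl_iff_disjoint_right.mp htE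
  obtain ⟨e, he⟩ : ∃ e, {a | f s a ≠ a} \ {a | s a ≠ a} = {e} := by
    rw [← Set.ncard_eq_one, Set.ncard_sdiff (hsupport s hs hsn hsE).1 hs, (hmaps s hs hsn).2, hsn]
    omega
  have hsfix : ∀ e ∈ E, s e = e := fun e he => not_not.mp (hsE.notMem_of_mem_right he)
  exact Perm.movedBy_diff_ne_singleton_of_commute (hf.commute_apply hsfix (Commute.refl s)) e he
end
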